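/- Let d, N be positive integers, x_1,…,x_N ∈ ℝ^d, σ* > 0, and let K be the N×N matrix with entries K_{ij} = exp(−σ*‖x_i − x_j‖²). Let y ∈ ℝ^N, q ∈ (0,1), γ > 0, and let κ > 0 be a constant with |K_{ij}| ≤ κ for all i, j. If α* ∈ ℝ^N is a global minimizer of the ℓ_q-regularized kernel regression objective Φ_q, then the number of nonzero coordinates of α* satisfies #{i : α*_i ≠ 0} ≤ (κ²/(γ(1−q)))^{q/(2−q)} · Σ_{i=1}^N |α*_i|^q. -/

import Mathlib

/-!
Fix a coordinate `i` with `t = α*_i ≠ 0`. Along that coordinate the objective is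
`s ↦ A (s - t)² + B (s - t) + γ |s|^q` up to a constant, with `A = (1/N) ∑_j K_{ji}² ≤ κ²`.
Since `|·|^q` is differentiable away from `0`, minimality at `t` gives the stationarity
relation `B t = -γ q |t|^q`, and comparison with `s = 0` gives `γ |t|^q ≤ A t² - B t`.
Together, `γ (1 - q) |t|^q ≤ κ² t²`, i.e. `|t|^q ≥ (γ (1 - q) / κ²)^{q/(2-q)}`: every nonzero
coordinate contributes at least this much to `∑ |α*_i|^q`.
-/

open Matrix Finset

theorem hasDerivAt_abs_rpow_of_ne_zero {q t : ℝ} (ht : t ≠ 0) :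
    HasDerivAt (fun s : ℝ => |s| ^ q) (q * |t| ^ q / t) t := by
  convert (hasDerivAt_abs ht).rpow_const (p := q) (Or.inl (abs_ne_zero.2 ht)) using 1
  rw [Real.rpow_sub_one (abs_ne_zero.2 ht)]
  field_simp
  rw [mul_assoc, self_mul_sign]

theorem mul_one_sub_mul_abs_rpow_le {A B γ q t : ℝ} (hq : q ≠ 0) (ht : t ≠ 0)
    (hmin : ∀ s, γ * |t| ^ q ≤ A * (s - t) ^ 2 + B * (s - t) + γ * |s| ^ q) :
    γ * (1 - q) * |t| ^ q ≤ A * t ^ 2 := by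
  have hloc : IsLocalMin (fun s => A * (s - t) ^ 2 + B * (s - t) + γ * |s| ^ q) t :=
    Filter.Eventually.of_forall fun s => by simpa using hmin s
  have hderiv : HasDerivAt (fun s => A * (s - t) ^ 2 + B * (s - t) + γ * |s| ^ q)
      (B + γ * (q * |t| ^ q / t)) t := by
    have hsub := (hasDerivAt_id' t).sub_const t
    exact ((((hsub.fun_pow 2).const_mul A).fun_add (hsub.const_mul B)).fun_add
      ((hasDerivAt_abs_rpow_of_ne_zero (q := q) ht).const_mul γ)).congr_deriv (by simp)
  have hstat : B * t = -(γ * q * |t| ^ q) := by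
    have h := hloc.hasDerivAt_eq_zero hderiv
    field_simp at h
    linear_combination h
  have hzero := hmin 0
  rw [abs_zero, Real.zero_rpow hq] at hzero
  nlinarith

theorem rpow_div_two_sub_le_rpow_of_mul_rpow_le_sq {c q u : ℝ} (hc : 0 ≤ c) (hq0 : 0 ≤ q)
    (hq2 : q < 2) (hu : 0 < u) (h : c * u ^ q ≤ u ^ 2) : c ^ (q / (2 - q)) ≤ u ^ q := by
  have hsplit : u ^ 2 = u ^ (2 - q) * u ^ q := by
    rw [← Real.rpow_add hu, sub_add_cancel, Real.rpow_two]
  have hc' : c ≤ u ^ (2 - q) :=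
    le_of_mul_le_mul_right (hsplit ▸ h) (Real.rpow_pos_of_pos hu q)
  calc c ^ (q / (2 - q)) ≤ (u ^ (2 - q)) ^ (q / (2 - q)) :=
        Real.rpow_le_rpow hc hc' (div_nonneg hq0 (by linarith))
    _ = u ^ q := by rw [← Real.rpow_mul hu.le, mul_div_cancel₀ _ (by linarith)]

theorem ncard_ne_zero_le_inv_mul_sum_abs_rpow {ι : Type*} [Fintype ι] {α : ι → ℝ} {c q : ℝ}
    (hc : 0 < c) (h : ∀ i, α i ≠ 0 → c ≤ |α i| ^ q) :
    (({i | α i ≠ 0} : Set ι).ncard : ℝ) ≤ c⁻¹ * ∑ i, |α i| ^ q := by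
  classical
  rw [← Finset.coe_filter_univ, Set.ncard_coe_finset, le_inv_mul_iff₀ hc, mul_comm]
  calc (#{i | α i ≠ 0} : ℝ) * c ≤ ∑ i ∈ {i | α i ≠ 0}, |α i| ^ q := by
        simpa using Finset.card_nsmul_le_sum _ _ c fun i hi => h i (by simpa using hi)
    _ ≤ ∑ i, |α i| ^ q :=
        Finset.sum_le_sum_of_subset_of_nonneg (Finset.subset_univ _)
          fun i _ _ => Real.rpow_nonneg (abs_nonneg _) q

theorem inv_card_mul_sum_sq_le {m : Type*} [Fintype m] [Nonempty m] {v : m → ℝ} {κ : ℝ}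
    (h : ∀ j, |v j| ≤ κ) : (1 / Fintype.card m : ℝ) * ∑ j, v j ^ 2 ≤ κ ^ 2 := by
  rw [one_div_mul_eq_div, div_le_iff₀ (by positivity), mul_comm, ← nsmul_eq_mul]
  exact Finset.sum_le_card_nsmul _ _ _ fun j _ => sq_le_sq' (abs_le.1 (h j)).1 (abs_le.1 (h j)).2

theorem mulVec_update_apply {m n R : Type*} [Fintype n] [DecidableEq n] [Ring R]
    (K : Matrix m n R) (α : n → R) (i : n) (s : R) (j : m) :
    (K *ᵥ Function.update α i s) j = (K *ᵥ α) j + K j i * (s - α i) := by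
  have hupdate : Function.update α i s = α + Pi.single i (s - α i) := by
    ext k
    rcases eq_or_ne k i with rfl | hk <;> simp [*]
  rw [hupdate, mulVec_add, Pi.add_apply, mulVec_single]
  simp

theorem sum_update_eq_sum_add_sub {n M : Type*} [Fintype n] [DecidableEq n] [AddCommGroup M]
    (f : n → M) (i : n) (b : M) :
    ∑ j, Function.update f i b j = ∑ j, f j + (b - f i) := by
  rw [Finset.sum_update_of_mem (Finset.mem_univ i),
    ← Finset.add_sum_erase _ _ (Finset.mem_univ i), Finset.sdiff_singleton_eq_erase]
  abel

noncomputable def lqObjective {m n : Type*} [Fintype m] [Fintype n] (w : ℝ)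
    (K : Matrix m n ℝ) (y : m → ℝ) (γ q : ℝ) (α : n → ℝ) : ℝ :=
  w * ∑ i, ((K *ᵥ α) i - y i) ^ 2 + γ * ∑ j, |α j| ^ q

section LqObjective

variable {m n : Type*} [Fintype m] [Fintype n] [DecidableEq n]

theorem lqObjective_update (w : ℝ) (K : Matrix m n ℝ) (y : m → ℝ) (γ q : ℝ) (α : n → ℝ)
    (i : n) (s : ℝ) :
    lqObjective w K y γ q (Function.update α i s) = lqObjective w K y γ q α
      + w * (∑ j, K j i ^ 2) * (s - α i) ^ 2
      + 2 * w * (∑ j, ((K *ᵥ α) j - y j) * K j i) * (s - α i)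
      + γ * (|s| ^ q - |α i| ^ q) := by
  have hfit : ∑ j, ((K *ᵥ α) j + K j i * (s - α i) - y j) ^ 2 = ∑ j, ((K *ᵥ α) j - y j) ^ 2
      + (∑ j, K j i ^ 2) * (s - α i) ^ 2
      + 2 * (∑ j, ((K *ᵥ α) j - y j) * K j i) * (s - α i) := by
    simp only [Finset.sum_mul, Finset.mul_sum, ← Finset.sum_add_distrib]
    exact Finset.sum_congr rfl fun j _ => by ring
  have hreg : ∑ j, |Function.update α i s j| ^ q = ∑ j, |α j| ^ q + (|s| ^ q - |α i| ^ q) := by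
    rw [← sum_update_eq_sum_add_sub]
    exact Finset.sum_congr rfl fun j _ => Function.apply_update (fun _ a => |a| ^ q) α i s j
  simp only [lqObjective, mulVec_update_apply, hfit, hreg]
  ring

theorem mul_one_sub_mul_abs_rpow_le_of_isMinimizer_lqObjective {w : ℝ} {K : Matrix m n ℝ}
    {y : m → ℝ} {γ q : ℝ} (hq : q ≠ 0) {αs : n → ℝ}
    (hmin : ∀ α, lqObjective w K y γ q αs ≤ lqObjective w K y γ q α) {i : n}
    (hi : αs i ≠ 0) : γ * (1 - q) * |αs i| ^ q ≤ w * (∑ j, K j i ^ 2) * αs i ^ 2 :=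
  mul_one_sub_mul_abs_rpow_le (B := 2 * w * ∑ j, ((K *ᵥ αs) j - y j) * K j i) hq hi fun s => by
    have hs := hmin (Function.update αs i s)
    rw [lqObjective_update] at hs
    linarith

end LqObjective

theorem lq_minimizer_sparsity_bound_general
    (N : ℕ)
    (K : Matrix (Fin N) (Fin N) ℝ)
    (y : Fin N → ℝ) (q : ℝ) (hq0 : 0 < q) (hq1 : q < 1)
    (γ : ℝ) (hγ : 0 < γ) (κ : ℝ) (hκ : 0 < κ)
    (hKκ : ∀ i j, |K i j| ≤ κ)
    (αs : Fin N → ℝ)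
    (hmin : ∀ α : Fin N → ℝ,
      (1 / N : ℝ) * ∑ i, ((K *ᵥ αs) i - y i) ^ 2 + γ * ∑ j, |αs j| ^ q ≤
        (1 / N : ℝ) * ∑ i, ((K *ᵥ α) i - y i) ^ 2 + γ * ∑ j, |α j| ^ q) :
    (({i : Fin N | αs i ≠ 0} : Set (Fin N)).ncard : ℝ) ≤
      (κ ^ 2 / (γ * (1 - q))) ^ (q / (2 - q)) * ∑ i, |αs i| ^ q := by
  have h1q : 0 < 1 - q := by linarith
  have hthreshold : ∀ i, αs i ≠ 0 → (γ * (1 - q) / κ ^ 2) ^ (q / (2 - q)) ≤ |αs i| ^ q := by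
    intro i hi
    have : Nonempty (Fin N) := ⟨i⟩
    have hcol : (1 / N : ℝ) * ∑ j, K j i ^ 2 ≤ κ ^ 2 := by
      simpa using inv_card_mul_sum_sq_le fun j => hKκ j i
    refine rpow_div_two_sub_le_rpow_of_mul_rpow_le_sq (by positivity) hq0.le (by linarith)
      (abs_pos.2 hi) ?_
    rw [div_mul_eq_mul_div, div_le_iff₀ (by positivity), sq_abs]
    calc γ * (1 - q) * |αs i| ^ q
        ≤ (1 / N : ℝ) * (∑ j, K j i ^ 2) * αs i ^ 2 :=
          mul_one_sub_mul_abs_rpow_le_of_isMinimizer_lqObjective hq0.ne' hmin hi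
      _ ≤ κ ^ 2 * αs i ^ 2 := by gcongr
      _ = αs i ^ 2 * κ ^ 2 := mul_comm _ _
  calc _ ≤ ((γ * (1 - q) / κ ^ 2) ^ (q / (2 - q)))⁻¹ * ∑ i, |αs i| ^ q :=
        ncard_ne_zero_le_inv_mul_sum_abs_rpow (by positivity) hthreshold
    _ = _ := by rw [← Real.inv_rpow (by positivity), inv_div]

/-- The number of nonzero coordinates of a global minimizer of the
`ℓ_q`-regularized Gaussian kernel regression objective (`0 < q < 1`) is at most
`(κ²/(γ(1−q)))^{q/(2−q)} · Σ_i |α*_i|^q`. -/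
theorem lq_minimizer_sparsity_bound
    (d N : ℕ) (hd : 0 < d) (hN : 0 < N)
    (x : Fin N → EuclideanSpace ℝ (Fin d)) (σ : ℝ) (hσ : 0 < σ)
    (K : Matrix (Fin N) (Fin N) ℝ)
    (hK : ∀ i j, K i j = Real.exp (-σ * ‖x i - x j‖ ^ 2))
    (y : Fin N → ℝ) (q : ℝ) (hq0 : 0 < q) (hq1 : q < 1)
    (γ : ℝ) (hγ : 0 < γ) (κ : ℝ) (hκ : 0 < κ)
    (hKκ : ∀ i j, |K i j| ≤ κ)
    (αs : Fin N → ℝ)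
    (hmin : ∀ α : Fin N → ℝ,
      (1 / N : ℝ) * ∑ i, ((K *ᵥ αs) i - y i) ^ 2 + γ * ∑ j, |αs j| ^ q ≤
        (1 / N : ℝ) * ∑ i, ((K *ᵥ α) i - y i) ^ 2 + γ * ∑ j, |α j| ^ q) :
    (({i : Fin N | αs i ≠ 0} : Set (Fin N)).ncard : ℝ) ≤
      (κ ^ 2 / (γ * (1 - q))) ^ (q / (2 - q)) * ∑ i, |αs i| ^ q :=
  lq_minimizer_sparsity_bound_general N K y q hq0 hq1 γ hγ κ hκ hKκ αs hmin
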